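/- For n = 2k+1 with k ≥ 1, D_n(s,t,q) = q^{n(n−1)} s^k t^{k+1} · D_n(s^{−1},t^{−1},q^{−1}), i.e. Σ_{π∈𝔇_n} s^{edes_D(π)} t^{odes_D(π)} q^{inv_D(π)} = Σ_{π∈𝔇_n} s^{k−edes_D(π)} t^{k+1−odes_D(π)} q^{n(n−1)−inv_D(π)}. For n = 2k with k ≥ 1, D_n(s,t,q) = q^{n(n−1)} s^{k−1} t^{k+1} · D_n(s^{−1},t^{−1},q^{−1}), i.e. Σ_{π∈𝔇_n} s^{edes_D(π)} t^{odes_D(π)} q^{inv_D(π)} = Σ_{π∈𝔇_n} s^{k−1−edes_D(π)} t^{k+1−odes_D(π)} q^{n(n−1)−inv_D(π)}. -/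

import Mathlib

open Finset

/-- The hyperoctahedral group `𝔅_n`, encoded as (permutation of positions, signs):
the signed permutation sends `i+1` to `±(σ i + 1)`. -/
abbrev BG (n : ℕ) := Equiv.Perm (Fin n) × (Fin n → Bool)

/-- The value `π_i` (for `1 ≤ i ≤ n`) of the signed permutation, with `π_0 = 0`. -/
def bval {n : ℕ} (w : BG n) (i : ℕ) : ℤ :=
  if h : 1 ≤ i ∧ i ≤ n then
    (if w.2 ⟨i - 1, by omega⟩ then -1 else 1) * (((w.1 ⟨i - 1, by omega⟩ : Fin n) : ℕ) + 1 : ℤ)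
  else 0

/-- `edes_B`: even `i ∈ {0,…,n−1}` with `π_i > π_{i+1}`. -/
def edesB {n : ℕ} (w : BG n) : ℕ :=
  ((range n).filter fun i => Even i ∧ bval w (i + 1) < bval w i).card

/-- `odes_B`: odd `i ∈ {0,…,n−1}` with `π_i > π_{i+1}`. -/
def odesB {n : ℕ} (w : BG n) : ℕ :=
  ((range n).filter fun i => Odd i ∧ bval w (i + 1) < bval w i).card

/-- `easc_B`: even `i ∈ {0,…,n−1}` with `π_i < π_{i+1}`. -/
def eascB {n : ℕ} (w : BG n) : ℕ :=
  ((range n).filter fun i => Even i ∧ bval w i < bval w (i + 1)).card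

/-- `oasc_B`: odd `i ∈ {0,…,n−1}` with `π_i < π_{i+1}`. -/
def oascB {n : ℕ} (w : BG n) : ℕ :=
  ((range n).filter fun i => Odd i ∧ bval w i < bval w (i + 1)).card

/-- type B inversion number -/
def invB {n : ℕ} (w : BG n) : ℕ :=
  ((Icc 1 n ×ˢ Icc 1 n).filter fun p => p.1 < p.2 ∧ bval w p.2 < bval w p.1).card
  + ((Icc 1 n ×ˢ Icc 1 n).filter fun p => p.1 < p.2 ∧ bval w p.2 < -bval w p.1).card
  + ((Icc 1 n).filter fun i => bval w i < 0).card

/-- `B_n(s,t,q)` -/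
noncomputable def Bpoly {A : Type*} [CommRing A] (n : ℕ) (s t q : A) : A :=
  ∑ w : BG n, s ^ edesB w * t ^ odesB w * q ^ invB w

/-- `B_n(1,q)` -/
noncomputable def BOne {A : Type*} [CommRing A] (n : ℕ) (q : A) : A :=
  ∑ w : BG n, q ^ invB w

/-- `[k]_q` -/
def qInt {A : Type*} [CommRing A] (k : ℕ) (q : A) : A := ∑ i ∈ range k, q ^ i

/-- `[k]_q!` -/
def qFact {A : Type*} [CommRing A] (k : ℕ) (q : A) : A := ∏ i ∈ range k, qInt (i + 1) q

/-- number of negative values `π_1,…,π_n` -/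
def negs {n : ℕ} (w : BG n) : ℕ := ((Icc 1 n).filter fun i => bval w i < 0).card

/-- the type D group `𝔇_n` inside `𝔅_n` -/
def DG (n : ℕ) : Finset (BG n) := univ.filter fun w => Even (negs w)

/-- `odes_D`: odd `i ∈ {−1,1,…,n−1}` with `π_i > π_{|i|+1}` (the index `i = −1`
contributes iff `−π_1 > π_2`). -/
def odesD {n : ℕ} (w : BG n) : ℕ :=
  ((Icc 1 (n - 1)).filter fun i => Odd i ∧ bval w (i + 1) < bval w i).card
  + (if bval w 2 < -bval w 1 then 1 else 0)

/-- `edes_D`: even `i ∈ {−1,1,…,n−1}` with `π_i > π_{i+1}`. -/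
def edesD {n : ℕ} (w : BG n) : ℕ :=
  ((Icc 1 (n - 1)).filter fun i => Even i ∧ bval w (i + 1) < bval w i).card

/-- type D inversion number -/
def invD {n : ℕ} (w : BG n) : ℕ :=
  ((Icc 1 n ×ˢ Icc 1 n).filter fun p => p.1 < p.2 ∧ bval w p.2 < bval w p.1).card
  + ((Icc 1 n ×ˢ Icc 1 n).filter fun p => p.1 < p.2 ∧ bval w p.2 < -bval w p.1).card

/-- `D_n(s,t,q)` -/
noncomputable def Dpoly {A : Type*} [CommRing A] (n : ℕ) (s t q : A) : A :=
  ∑ w ∈ DG n, s ^ edesD w * t ^ odesD w * q ^ invD w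

/-- `D_n(1,q)` -/
noncomputable def DOne {A : Type*} [CommRing A] (n : ℕ) (q : A) : A :=
  ∑ w ∈ DG n, q ^ invD w

section AuxProof

open Finset

lemma filterComplCard {α : Type*} (s : Finset α) (p q : α → Prop)
    [DecidablePred p] [DecidablePred q]
    (h : ∀ x ∈ s, q x ↔ ¬ p x) :
    (s.filter p).card + (s.filter q).card = s.card := by
  have h2 : s.filter q = s.filter (fun x => ¬ p x) := Finset.filter_congr h
  rw [h2]
  exact Finset.card_filter_add_card_filter_not p

lemma filterComplCard₂ {α : Type*} (s : Finset α) (r p q : α → Prop)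
    [DecidablePred r] [DecidablePred p] [DecidablePred q]
    (h : ∀ x ∈ s, r x → (q x ↔ ¬ p x)) :
    (s.filter fun x => r x ∧ p x).card + (s.filter fun x => r x ∧ q x).card
      = (s.filter r).card := by
  rw [← Finset.filter_filter r p s, ← Finset.filter_filter r q s]
  apply filterComplCard
  intro x hx
  rw [Finset.mem_filter] at hx
  exact h x hx.1 hx.2

lemma bval_eq {n : ℕ} (w : BG n) {i : ℕ} (h1 : 1 ≤ i) (h2 : i ≤ n) :
    bval w i = (if w.2 ⟨i - 1, by omega⟩ then -1 else 1)
      * (((w.1 ⟨i - 1, by omega⟩ : Fin n) : ℕ) + 1 : ℤ) := by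
  unfold bval
  rw [dif_pos ⟨h1, h2⟩]

lemma bval_cases {n : ℕ} (w : BG n) {i : ℕ} (h1 : 1 ≤ i) (h2 : i ≤ n) :
    bval w i = (((w.1 ⟨i - 1, by omega⟩ : Fin n) : ℕ) + 1 : ℤ)
    ∨ bval w i = -((((w.1 ⟨i - 1, by omega⟩ : Fin n) : ℕ) + 1 : ℤ)) := by
  rw [bval_eq w h1 h2]
  cases h : w.2 ⟨i - 1, by omega⟩ <;> simp

lemma val_ne {n : ℕ} (w : BG n) {i j : ℕ} (h1 : 1 ≤ i) (h2 : i ≤ n)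
    (h3 : 1 ≤ j) (h4 : j ≤ n) (hij : i ≠ j) :
    ((w.1 ⟨i - 1, by omega⟩ : Fin n) : ℕ) ≠ ((w.1 ⟨j - 1, by omega⟩ : Fin n) : ℕ) := by
  intro h
  have h5 : w.1 ⟨i - 1, by omega⟩ = w.1 ⟨j - 1, by omega⟩ := Fin.ext h
  have h6 := w.1.injective h5
  have h7 : i - 1 = j - 1 := congrArg Fin.val h6
  omega

lemma noTie {n : ℕ} (w : BG n) {i j : ℕ} (h1 : 1 ≤ i) (h2 : i ≤ n)
    (h3 : 1 ≤ j) (h4 : j ≤ n) (hij : i ≠ j) :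
    bval w j ≠ bval w i ∧ bval w j ≠ -bval w i := by
  have h5 := val_ne w h1 h2 h3 h4 hij
  have hci := bval_cases w h1 h2
  have hcj := bval_cases w h3 h4
  omega

def cmpHyp {n : ℕ} (w w' : BG n) : Prop :=
  ∀ i j : ℕ, 1 ≤ i → i ≤ n → 1 ≤ j → j ≤ n → i ≠ j →
    ((bval w' j < bval w' i ↔ bval w i < bval w j) ∧
     (bval w' j < -bval w' i ↔ -bval w i < bval w j))

def cntE (m : ℕ) : ℕ := ((Icc 1 m).filter fun i => Even i).card
def cntO (m : ℕ) : ℕ := ((Icc 1 m).filter fun i => Odd i).card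

lemma cnt_eq : ∀ m : ℕ, cntE m = m / 2 ∧ cntO m = (m + 1) / 2 := by
  intro m
  induction m with
  | zero => simp [cntE, cntO]
  | succ m ih =>
    obtain ⟨ihE, ihO⟩ := ih
    have hins : Icc 1 (m + 1) = insert (m + 1) (Icc 1 m) :=
      (Finset.insert_Icc_right_eq_Icc_add_one (by omega)).symm
    have hnm : (m + 1) ∉ Icc 1 m := by simp
    constructor
    · unfold cntE at *
      rw [hins, Finset.filter_insert]
      by_cases h : Even (m + 1)
      · rw [if_pos h, Finset.card_insert_of_notMem (fun hc => hnm (Finset.mem_of_mem_filter _ hc))]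
        rw [Nat.even_iff] at h
        omega
      · rw [if_neg h, ihE]
        rw [Nat.even_iff] at h
        omega
    · unfold cntO at *
      rw [hins, Finset.filter_insert]
      by_cases h : Odd (m + 1)
      · rw [if_pos h, Finset.card_insert_of_notMem (fun hc => hnm (Finset.mem_of_mem_filter _ hc))]
        rw [Nat.odd_iff] at h
        omega
      · rw [if_neg h, ihO]
        rw [Nat.odd_iff] at h
        omega

lemma edes_sum {n : ℕ} (w w' : BG n) (H : cmpHyp w w') :
    edesD w + edesD w' = cntE (n - 1) := by
  unfold edesD cntE
  apply filterComplCard₂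
  intro x hx _
  rw [Finset.mem_Icc] at hx
  obtain ⟨hx1, hx2⟩ := hx
  have hH := (H x (x + 1) hx1 (by omega) (by omega) (by omega) (by omega)).1
  have hne := (noTie w hx1 (by omega) (by omega : 1 ≤ x + 1) (by omega) (by omega)).1
  omega

lemma odes_sum {n : ℕ} (hn : 2 ≤ n) (w w' : BG n) (H : cmpHyp w w') :
    odesD w + odesD w' = cntO (n - 1) + 1 := by
  unfold odesD cntO
  have hA := filterComplCard₂ (Icc 1 (n - 1)) (fun i => Odd i)
    (fun i => bval w (i + 1) < bval w i) (fun i => bval w' (i + 1) < bval w' i) ?_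
  · have hB : (if bval w 2 < -bval w 1 then 1 else 0)
        + (if bval w' 2 < -bval w' 1 then 1 else 0) = 1 := by
      have hH := (H 1 2 le_rfl (by omega) (by omega) hn (by omega)).2
      have hne := (noTie w (le_rfl : 1 ≤ 1) (by omega) (by omega : 1 ≤ 2) hn (by omega)).2
      split_ifs with h1 h2 h2 <;> omega
    omega
  · intro x hx _
    rw [Finset.mem_Icc] at hx
    obtain ⟨hx1, hx2⟩ := hx
    have hH := (H x (x + 1) hx1 (by omega) (by omega) (by omega) (by omega)).1
    have hne := (noTie w hx1 (by omega) (by omega : 1 ≤ x + 1) (by omega) (by omega)).1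
    omega

lemma cardLtPairs (n : ℕ) :
    (((Icc 1 n) ×ˢ (Icc 1 n)).filter fun p : ℕ × ℕ => p.1 < p.2).card * 2 = n * (n - 1) := by
  set s : Finset ℕ := Icc 1 n with hs
  set X : Finset (ℕ × ℕ) := s ×ˢ s with hX
  have hsym : (X.filter fun p => p.1 < p.2).card = (X.filter fun p => p.2 < p.1).card := by
    apply Finset.card_bij (fun p _ => (p.2, p.1))
    · intro a ha
      simp only [hX, Finset.mem_filter, Finset.mem_product] at ha ⊢
      tauto
    · intro a ha b hb hab
      rw [Prod.ext_iff] at hab ⊢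
      exact ⟨hab.2, hab.1⟩
    · intro b hb
      refine ⟨(b.2, b.1), ?_, rfl⟩
      simp only [hX, Finset.mem_filter, Finset.mem_product] at hb ⊢
      tauto
  have hlt : X.filter (fun p => p.1 < p.2) = X.filter (fun p => p.1 ≠ p.2 ∧ p.1 < p.2) := by
    apply Finset.filter_congr
    intro x _
    constructor
    · intro h; exact ⟨by omega, h⟩
    · exact fun h => h.2
  have hgt : X.filter (fun p => p.2 < p.1) = X.filter (fun p => p.1 ≠ p.2 ∧ p.2 < p.1) := by
    apply Finset.filter_congr
    intro x _
    constructor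
    · intro h; exact ⟨by omega, h⟩
    · exact fun h => h.2
  have hsum := filterComplCard₂ X (fun p => p.1 ≠ p.2) (fun p => p.1 < p.2)
    (fun p => p.2 < p.1) (by intro x _ hx; omega)
  have hoff : X.filter (fun p => p.1 ≠ p.2) = s.offDiag := by
    rw [hX]; ext p; simp [Finset.mem_offDiag, and_assoc]
  have hcards : s.card = n := by rw [hs, Nat.card_Icc]; omega
  have hcard : (X.filter fun p => p.1 ≠ p.2).card = n * n - n := by
    rw [hoff, Finset.offDiag_card, hcards]
  have e1 : (X.filter fun p => p.1 < p.2).card = (X.filter fun p => p.1 ≠ p.2 ∧ p.1 < p.2).card := by rw [hlt]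
  have e2 : (X.filter fun p => p.2 < p.1).card = (X.filter fun p => p.1 ≠ p.2 ∧ p.2 < p.1).card := by rw [hgt]
  have hnn : n * n - n = n * (n - 1) := by
    cases n with
    | zero => simp
    | succ m => rw [Nat.succ_sub_one, Nat.mul_succ]; omega
  omega

lemma inv_sum {n : ℕ} (w w' : BG n) (H : cmpHyp w w') :
    invD w + invD w' = n * (n - 1) := by
  unfold invD
  have hmem : ∀ p : ℕ × ℕ, p ∈ (Icc 1 n ×ˢ Icc 1 n) → p.1 < p.2 →
      1 ≤ p.1 ∧ p.1 ≤ n ∧ 1 ≤ p.2 ∧ p.2 ≤ n := by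
    intro p hp _
    simp only [Finset.mem_product, Finset.mem_Icc] at hp
    omega
  have h1 := filterComplCard₂ (Icc 1 n ×ˢ Icc 1 n) (fun p => p.1 < p.2)
    (fun p => bval w p.2 < bval w p.1) (fun p => bval w' p.2 < bval w' p.1) ?_
  · have h2 := filterComplCard₂ (Icc 1 n ×ˢ Icc 1 n) (fun p => p.1 < p.2)
      (fun p => bval w p.2 < -bval w p.1) (fun p => bval w' p.2 < -bval w' p.1) ?_
    · have h3 := cardLtPairs n
      omega
    · intro p hp hlt
      obtain ⟨ha, hb, hc, hd⟩ := hmem p hp hlt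
      have hH := (H p.1 p.2 ha hb hc hd (by omega)).2
      have hne := (noTie w ha hb hc hd (by omega)).2
      omega
  · intro p hp hlt
    obtain ⟨ha, hb, hc, hd⟩ := hmem p hp hlt
    have hH := (H p.1 p.2 ha hb hc hd (by omega)).1
    have hne := (noTie w ha hb hc hd (by omega)).1
    omega

def phiE {n : ℕ} (w : BG n) : BG n := (w.1, fun j => !(w.2 j))

def phiO {n : ℕ} (w : BG n) : BG n :=
  (w.1, fun j => if (w.1 j : ℕ) = 0 then w.2 j else !(w.2 j))

lemma phiE_invol {n : ℕ} (w : BG n) : phiE (phiE w) = w := by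
  unfold phiE
  simp

lemma phiO_invol {n : ℕ} (w : BG n) : phiO (phiO w) = w := by
  unfold phiO
  refine Prod.ext rfl ?_
  funext j
  by_cases h : (w.1 j : ℕ) = 0 <;> simp [h]

lemma bval_phiE {n : ℕ} (w : BG n) (i : ℕ) : bval (phiE w) i = -bval w i := by
  unfold bval phiE
  split
  · cases h : w.2 ⟨i - 1, by omega⟩ <;> simp [h] <;> ring
  · simp

lemma bval_phiO {n : ℕ} (w : BG n) {i : ℕ} (h1 : 1 ≤ i) (h2 : i ≤ n) :
    (((w.1 ⟨i - 1, by omega⟩ : Fin n) : ℕ) = 0 ∧ bval (phiO w) i = bval w i) ∨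
    (((w.1 ⟨i - 1, by omega⟩ : Fin n) : ℕ) ≠ 0 ∧ bval (phiO w) i = -bval w i) := by
  rw [bval_eq w h1 h2, bval_eq (phiO w) h1 h2]
  by_cases h : ((w.1 ⟨i - 1, by omega⟩ : Fin n) : ℕ) = 0
  · left
    refine ⟨h, ?_⟩
    simp [phiO, h]
  · right
    refine ⟨h, ?_⟩
    have h2' : (phiO w).2 ⟨i - 1, by omega⟩ = !(w.2 ⟨i - 1, by omega⟩) := by
      simp [phiO, h]
    have h1' : ((phiO w).1 ⟨i - 1, by omega⟩ : ℕ) = ((w.1 ⟨i - 1, by omega⟩ : Fin n) : ℕ) := rfl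
    rw [h2', h1']
    cases hb : w.2 ⟨i - 1, by omega⟩ <;> simp <;> ring

lemma cmpHyp_phiE {n : ℕ} (w : BG n) : cmpHyp w (phiE w) := by
  intro i j _ _ _ _ _
  simp only [bval_phiE]
  constructor <;> omega

lemma cmpHyp_phiO {n : ℕ} (w : BG n) : cmpHyp w (phiO w) := by
  intro i j h1 h2 h3 h4 hij
  have hab := val_ne w h1 h2 h3 h4 hij
  have hci := bval_cases w h1 h2
  have hcj := bval_cases w h3 h4
  have hpi := bval_phiO w h1 h2
  have hpj := bval_phiO w h3 h4
  omega

lemma negs_phiE_sum {n : ℕ} (w : BG n) : negs w + negs (phiE w) = n := by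
  unfold negs
  have h := filterComplCard (Icc 1 n) (fun i => bval w i < 0)
    (fun i => bval (phiE w) i < 0) ?_
  · rw [h, Nat.card_Icc]
    omega
  · intro x hx
    rw [Finset.mem_Icc] at hx
    have hc := bval_cases w hx.1 hx.2
    show bval (phiE w) x < 0 ↔ ¬ bval w x < 0
    rw [bval_phiE]
    omega

lemma negs_phiO_phiE_odd {n : ℕ} (hn : 1 ≤ n) (w : BG n) :
    Odd (negs (phiO w) + negs (phiE w)) := by
  unfold negs
  rw [Finset.card_filter, Finset.card_filter, ← Finset.sum_add_distrib]
  set i₀ : ℕ := ((w.1.symm ⟨0, by omega⟩ : Fin n) : ℕ) + 1 with hi₀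
  have hlt := (w.1.symm ⟨0, by omega⟩).isLt
  have hl : 1 ≤ i₀ := by omega
  have hr : i₀ ≤ n := by omega
  have hi₀mem : i₀ ∈ Icc 1 n := by
    rw [Finset.mem_Icc]
    exact ⟨hl, hr⟩
  have hspec : ((w.1 ⟨i₀ - 1, by omega⟩ : Fin n) : ℕ) = 0 := by
    have : (⟨i₀ - 1, by omega⟩ : Fin n) = w.1.symm ⟨0, by omega⟩ := by
      apply Fin.ext
      simp [hi₀]
    rw [this, Equiv.apply_symm_apply]
  rw [← Finset.sum_erase_add _ _ hi₀mem]
  have h1 : Even (∑ i ∈ (Icc 1 n).erase i₀,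
      ((if bval (phiO w) i < 0 then 1 else 0) + (if bval (phiE w) i < 0 then 1 else 0))) := by
    apply Finset.even_sum
    intro i hi
    have hmem' := Finset.mem_of_mem_erase hi
    have hne : i ≠ i₀ := Finset.ne_of_mem_erase hi
    rw [Finset.mem_Icc] at hmem'
    obtain ⟨ha, hb⟩ := hmem'
    have hO := bval_phiO w ha hb
    rcases hO with ⟨h0, hOe⟩ | ⟨h0, hOe⟩
    · exfalso
      apply hne
      have hfe : w.1 ⟨i - 1, by omega⟩ = ⟨0, by omega⟩ := Fin.ext h0
      have hse : (⟨i - 1, by omega⟩ : Fin n) = w.1.symm ⟨0, by omega⟩ :=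
        (Equiv.eq_symm_apply w.1).mpr hfe
      have hv : i - 1 = ((w.1.symm ⟨0, by omega⟩ : Fin n) : ℕ) := congrArg Fin.val hse
      omega
    · rw [hOe, bval_phiE]
      exact ⟨_, rfl⟩
  have h2 : (if bval (phiO w) i₀ < 0 then 1 else 0)
      + (if bval (phiE w) i₀ < 0 then 1 else 0) = 1 := by
    have hO := bval_phiO w hl hr
    have hc := bval_cases w hl hr
    rcases hO with ⟨h0, hOe⟩ | ⟨h0, hOe⟩
    · rw [hOe, bval_phiE]
      split_ifs with ha hb hb <;> omega
    · exact absurd hspec h0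
  rw [h2]
  obtain ⟨m, hm⟩ := h1
  exact ⟨m, by omega⟩

lemma mem_DG_phiE {n : ℕ} (hn : Even n) {w : BG n} (hw : w ∈ DG n) : phiE w ∈ DG n := by
  simp only [DG, Finset.mem_filter, Finset.mem_univ, true_and] at hw ⊢
  have h := negs_phiE_sum w
  rw [Nat.even_iff] at hw hn ⊢
  omega

lemma mem_DG_phiO {n : ℕ} (hn : Odd n) {w : BG n} (hw : w ∈ DG n) : phiO w ∈ DG n := by
  simp only [DG, Finset.mem_filter, Finset.mem_univ, true_and] at hw ⊢
  rw [Nat.odd_iff] at hn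
  have h1 := negs_phiE_sum w
  have h2 := negs_phiO_phiE_odd (by omega) w
  rw [Nat.even_iff] at hw ⊢
  rw [Nat.odd_iff] at h2
  omega

end AuxProof

noncomputable section

/-- the field `ℚ(q,s,t)` -/
abbrev K : Type := FractionRing (MvPolynomial (Fin 3) ℚ)

def qK : K := algebraMap (MvPolynomial (Fin 3) ℚ) K (MvPolynomial.X 0)
def sK : K := algebraMap (MvPolynomial (Fin 3) ℚ) K (MvPolynomial.X 1)
def tK : K := algebraMap (MvPolynomial (Fin 3) ℚ) K (MvPolynomial.X 2)

/-- the ring `R = ℚ(q,s,t)[M]/(M² − (1−s)(1−t))` -/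
abbrev R : Type := AdjoinRoot ((Polynomial.X : Polynomial K) ^ 2
  - Polynomial.C ((1 - sK) * (1 - tK)))

/-- the square root `M` of `(1−s)(1−t)` -/
def M : R := AdjoinRoot.root _

def ofK : K →+* R := algebraMap K R


section FinalProof

open Finset

lemma algX_ne (i : Fin 3) :
    (algebraMap (MvPolynomial (Fin 3) ℚ) K) (MvPolynomial.X i) ≠ 0 := by
  intro h
  have h0 : (algebraMap (MvPolynomial (Fin 3) ℚ) K) (MvPolynomial.X i)
      = (algebraMap (MvPolynomial (Fin 3) ℚ) K) 0 := by rw [h, map_zero]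
  exact MvPolynomial.X_ne_zero i (IsFractionRing.injective _ _ h0)

lemma sK_ne : sK ≠ 0 := algX_ne 1
lemma tK_ne : tK ≠ 0 := algX_ne 2
lemma qK_ne : qK ≠ 0 := algX_ne 0

lemma statBounds {n : ℕ} (hn : 2 ≤ n) (w : BG n) :
    edesD w ≤ cntE (n - 1) ∧ odesD w ≤ cntO (n - 1) + 1 ∧ invD w ≤ n * (n - 1) := by
  have he := edes_sum w (phiE w) (cmpHyp_phiE w)
  have ho := odes_sum hn w (phiE w) (cmpHyp_phiE w)
  have hv := inv_sum w (phiE w) (cmpHyp_phiE w)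
  omega

lemma master {n : ℕ} (hn : 2 ≤ n) (φ : BG n → BG n)
    (hφφ : ∀ w, φ (φ w) = w) (hmem : ∀ w ∈ DG n, φ w ∈ DG n)
    (hH : ∀ w, cmpHyp w (φ w)) :
    Dpoly n sK tK qK =
      ∑ w ∈ DG n, sK ^ (cntE (n - 1) - edesD w) * tK ^ (cntO (n - 1) + 1 - odesD w)
        * qK ^ (n * (n - 1) - invD w) := by
  unfold Dpoly
  refine Finset.sum_nbij' φ φ hmem hmem (fun w _ => hφφ w) (fun w _ => hφφ w) ?_
  intro w _
  have he := edes_sum w (φ w) (hH w)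
  have ho := odes_sum hn w (φ w) (hH w)
  have hv := inv_sum w (φ w) (hH w)
  have he' : cntE (n - 1) - edesD (φ w) = edesD w := by omega
  have ho' : cntO (n - 1) + 1 - odesD (φ w) = odesD w := by omega
  have hv' : n * (n - 1) - invD (φ w) = invD w := by omega
  rw [he', ho', hv']

lemma keySum {n : ℕ} (hn : 2 ≤ n) :
    Dpoly n sK tK qK =
      ∑ w ∈ DG n, sK ^ (cntE (n - 1) - edesD w) * tK ^ (cntO (n - 1) + 1 - odesD w)
        * qK ^ (n * (n - 1) - invD w) := by
  rcases Nat.even_or_odd n with he | ho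
  · exact master hn phiE phiE_invol (fun w hw => mem_DG_phiE he hw) cmpHyp_phiE
  · exact master hn phiO phiO_invol (fun w hw => mem_DG_phiO ho hw) cmpHyp_phiO

lemma keyMul {n : ℕ} (hn : 2 ≤ n) :
    Dpoly n sK tK qK =
      qK ^ (n * (n - 1)) * sK ^ (cntE (n - 1)) * tK ^ (cntO (n - 1) + 1)
        * Dpoly n sK⁻¹ tK⁻¹ qK⁻¹ := by
  rw [keySum hn]
  unfold Dpoly
  rw [Finset.mul_sum]
  apply Finset.sum_congr rfl
  intro w hw
  obtain ⟨he, ho, hv⟩ := statBounds hn w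
  rw [pow_sub₀ sK sK_ne he, pow_sub₀ tK tK_ne ho, pow_sub₀ qK qK_ne hv,
    inv_pow, inv_pow, inv_pow]
  ring

end FinalProof

theorem typeD_reciprocity :
    -- odd case `n = 2k+1` (`k ≥ 1`), multiplicative form
    (∀ k : ℕ, 1 ≤ k →
      Dpoly (2 * k + 1) sK tK qK =
        qK ^ ((2 * k + 1) * (2 * k + 1 - 1)) * sK ^ k * tK ^ (k + 1)
          * Dpoly (2 * k + 1) sK⁻¹ tK⁻¹ qK⁻¹)
    ∧ -- odd case, as an identity of sums
    (∀ k : ℕ, 1 ≤ k →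
      Dpoly (2 * k + 1) sK tK qK =
        ∑ w ∈ DG (2 * k + 1),
          sK ^ (k - edesD w) * tK ^ (k + 1 - odesD w)
            * qK ^ ((2 * k + 1) * (2 * k + 1 - 1) - invD w))
    ∧ -- even case `n = 2k` (`k ≥ 1`), multiplicative form
    (∀ k : ℕ, 1 ≤ k →
      Dpoly (2 * k) sK tK qK =
        qK ^ ((2 * k) * (2 * k - 1)) * sK ^ (k - 1) * tK ^ (k + 1)
          * Dpoly (2 * k) sK⁻¹ tK⁻¹ qK⁻¹)
    ∧ -- even case, as an identity of sums
    (∀ k : ℕ, 1 ≤ k →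
      Dpoly (2 * k) sK tK qK =
        ∑ w ∈ DG (2 * k),
          sK ^ (k - 1 - edesD w) * tK ^ (k + 1 - odesD w)
            * qK ^ ((2 * k) * (2 * k - 1) - invD w)) := by
  refine ⟨?_, ?_, ?_, ?_⟩
  · intro k hk
    have hn : 2 ≤ 2 * k + 1 := by omega
    have hE : cntE (2 * k + 1 - 1) = k := by rw [(cnt_eq _).1]; omega
    have hO : cntO (2 * k + 1 - 1) = k := by rw [(cnt_eq _).2]; omega
    have h := keyMul hn
    rw [hE, hO] at h
    exact h
  · intro k hk
    have hn : 2 ≤ 2 * k + 1 := by omega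
    have h := keySum hn
    simp only [(by rw [(cnt_eq _).1]; omega : cntE (2 * k + 1 - 1) = k),
      (by rw [(cnt_eq _).2]; omega : cntO (2 * k + 1 - 1) = k)] at h
    exact h
  · intro k hk
    have hn : 2 ≤ 2 * k := by omega
    have hE : cntE (2 * k - 1) = k - 1 := by rw [(cnt_eq _).1]; omega
    have hO : cntO (2 * k - 1) = k := by rw [(cnt_eq _).2]; omega
    have h := keyMul hn
    rw [hE, hO] at h
    exact h
  · intro k hk
    have hn : 2 ≤ 2 * k := by omega
    have h := keySum hn
    simp only [(by rw [(cnt_eq _).1]; omega : cntE (2 * k - 1) = k - 1),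
      (by rw [(cnt_eq _).2]; omega : cntO (2 * k - 1) = k)] at h
    exact h


end
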